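/- (Theorem 4.4: conditional convergence of the two-dimensional explicit scheme, 0 < γ < 1.) Let γ ∈ (0,1), α, β ∈ (1,2], integers N_x, N_y ≥ 2 and N_t ≥ 1, reals τ, Δx, Δy > 0, and nonnegative reals c_{i,j,k}, d_{i,j,k} (1 ≤ i ≤ N_x-1, 1 ≤ j ≤ N_y-1, 0 ≤ k ≤ N_t - 1). Let C_max be a real with (-κ_α)·(4-2^{3-α})·c_{i,j,k}/Γ(4-α) ≤ C_max and (-κ_β)·(4-2^{3-β})·d_{i,j,k}/Γ(4-β) ≤ C_max for all i, j, k, and assume Γ(2-γ)·C_max·(τ^γ/(Δx)^α + τ^γ/(Δy)^β) ≤ 1 - 2^{-γ}. Set σ'_{i,j,k} = -Γ(2-γ)·τ^γ·κ_α·c_{i,j,k}/(Γ(4-α)·(Δx)^α) ≥ 0 and σ''_{i,j,k} = -Γ(2-γ)·τ^γ·κ_β·d_{i,j,k}/(Γ(4-β)·(Δy)^β) ≥ 0. Let R^k_{i,j} be reals with R_max = max_{i,j,k} |R^k_{i,j}|. Suppose real numbers ε^k_{i,j} satisfy ε^0_{i,j} = 0 for all i, j; ε^k_{i,j} = 0 whenever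 i ∈ {0, N_x} or j ∈ {0, N_y} and 1 ≤ k ≤ N_t; ε^1_{i,j} = R^1_{i,j} for interior (i,j); and for all interior (i,j) and 1 ≤ k ≤ N_t - 1: ε^{k+1}_{i,j} = (1 - l_1 + σ'_{i,j,k}·g^{α,N_x}_{i,i} + σ''_{i,j,k}·g^{β,N_y}_{j,j})·ε^k_{i,j} + Σ_{s=1}^{k-1}(l_s - l_{s+1})·ε^{k-s}_{i,j} + σ'_{i,j,k}·Σ_{m=0, m≠i}^{N_x} g^{α,N_x}_{i,m}·ε^k_{m,j} + σ''_{i,j,k}·Σ_{m=0, m≠j}^{N_y} g^{β,N_y}_{j,m}·ε^k_{i,m} + R^{k+1}_{i,j}. Then for every 1 ≤ k ≤ N_t: max_{i,j} |ε^k_{i,j}| ≤ R_max / l_{k-1} ≤ (k^γ/(1-γ))·R_max. In particular, if T > 0, N_t·τ ≤ T and |R^k_{i,j}| ≤ C·τ^γ·(τ^{2-γ} + (Δx)^2 + (Δy)^2) for all i, j, k, then max_{i,j} |ε^k_{i,j}| ≤ (C·T^γ/(1-γ))·(τ^{2-γ} + (Δx)^2 + (Δy)^2) for all k. -/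

import Mathlib

/-- The coefficients `a^ν_{j,m}` of the second-order discretization of the left
Riemann–Liouville fractional derivative. All powers are real powers. -/
noncomputable def aCoef (ν : ℝ) (j m : ℕ) : ℝ :=
  if m = j then 1
  else if m = 0 then ((j : ℝ) - 1) ^ (3 - ν) - (j : ℝ) ^ (2 - ν) * ((j : ℝ) - 3 + ν)
  else ((j : ℝ) - (m : ℝ) + 1) ^ (3 - ν) - 2 * ((j : ℝ) - (m : ℝ)) ^ (3 - ν)
    + ((j : ℝ) - (m : ℝ) - 1) ^ (3 - ν)

/-- The coefficients `b^ν_{j,m}` of the second-order discretization of the right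
Riemann–Liouville fractional derivative on a grid with `N` subintervals. -/
noncomputable def bCoef (ν : ℝ) (N j m : ℕ) : ℝ :=
  if m = j then 1
  else if m = N then (3 - ν - (N : ℝ) + (j : ℝ)) * ((N : ℝ) - (j : ℝ)) ^ (2 - ν)
    + ((N : ℝ) - (j : ℝ) - 1) ^ (3 - ν)
  else ((m : ℝ) - (j : ℝ) + 1) ^ (3 - ν) - 2 * ((m : ℝ) - (j : ℝ)) ^ (3 - ν)
    + ((m : ℝ) - (j : ℝ) - 1) ^ (3 - ν)

/-- The coefficients `p^ν_{i,m}` (left-derivative part), for `1 ≤ i ≤ N-1`. -/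
noncomputable def pCoef (ν : ℝ) (i m : ℕ) : ℝ :=
  if m < i then aCoef ν (i - 1) m - 2 * aCoef ν i m + aCoef ν (i + 1) m
  else if m = i then -2 * aCoef ν i i + aCoef ν (i + 1) i
  else if m = i + 1 then aCoef ν (i + 1) (i + 1)
  else 0

/-- The coefficients `q^ν_{i,m}` (right-derivative part), for `1 ≤ i ≤ N-1`. -/
noncomputable def qCoef (ν : ℝ) (N i m : ℕ) : ℝ :=
  if m + 1 < i then 0
  else if m + 1 = i then bCoef ν N (i - 1) (i - 1)
  else if m = i then -2 * bCoef ν N i i + bCoef ν N (i - 1) i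
  else bCoef ν N (i - 1) m - 2 * bCoef ν N i m + bCoef ν N (i + 1) m

/-- The Riesz-derivative difference coefficients `g^{ν,N}_{i,m} = p^ν_{i,m} + q^ν_{i,m}`. -/
noncomputable def gCoef (ν : ℝ) (N i m : ℕ) : ℝ := pCoef ν i m + qCoef ν N i m

/-- The L1 coefficients `l_s = (s+1)^(1-γ) - s^(1-γ)` of the Caputo discretization. -/
noncomputable def lCoef (γ : ℝ) (s : ℕ) : ℝ := ((s : ℝ) + 1) ^ (1 - γ) - (s : ℝ) ^ (1 - γ)

/-- The Riesz constant `κ_ν = 1 / (2 cos(νπ/2))`. -/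
noncomputable def kappa (ν : ℝ) : ℝ := 1 / (2 * Real.cos (ν * Real.pi / 2))

/-- The maximum of `|v i|` over `0 ≤ i ≤ N`. -/
noncomputable def maxAbs (N : ℕ) (v : ℕ → ℝ) : ℝ :=
  (Finset.range (N + 1)).sup' Finset.nonempty_range_add_one fun i => |v i|

/-- The maximum of `|v i j|` over `0 ≤ i ≤ Nx`, `0 ≤ j ≤ Ny`. -/
noncomputable def maxAbs2 (Nx Ny : ℕ) (v : ℕ → ℕ → ℝ) : ℝ :=
  ((Finset.range (Nx + 1)) ×ˢ (Finset.range (Ny + 1))).sup'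
    (Finset.nonempty_range_add_one.product Finset.nonempty_range_add_one) fun p => |v p.1 p.2|

/-!
Stability by a discrete maximum principle. Writing the Riesz weights as
`g_{i,m} = p_{i,m} + p_{N-i,N-m}`, their signs reduce to convexity properties of `x ↦ x^s`,
`s = 3 - ν ∈ [1, 2)`: the off-diagonal weights are nonnegative, the diagonal one is
`2·2^s - 8`, and interior row sums are nonpositive. Under the stability condition the weight of
`ε^k_{i,j}` is nonnegative too, so `ε^{k+1}_{i,j} - R^{k+1}_{i,j}` is a combination of earlier
errors whose absolute weights add up to `1 - l_k`. Hence `max |ε^{k+1}| ≤ (1 - l_k) M + R_max`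
whenever `M` bounds the earlier levels, and `M = R_max / l_k` is a fixed point of this bound.
Finally `l_{k-1} ≥ (1 - γ) k^{-γ}` by the mean value theorem.
-/

open Real Set

/-! ### Second differences of real powers -/

lemma ConvexOn.secondDiff_nonneg {D : Set ℝ} {f : ℝ → ℝ} (hf : ConvexOn ℝ D f) {x : ℝ}
    (hl : x - 1 ∈ D) (hr : x + 1 ∈ D) : 0 ≤ f (x - 1) - 2 * f x + f (x + 1) := by
  have h := hf.2 hl hr (by norm_num : (0 : ℝ) ≤ 1 / 2) (by norm_num : (0 : ℝ) ≤ 1 / 2)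
    (by norm_num)
  simp only [smul_eq_mul] at h
  rw [show 1 / 2 * (x - 1) + 1 / 2 * (x + 1) = x by ring] at h
  linarith

lemma hasDerivAt_rpow_add_const (p c : ℝ) {x : ℝ} (hx : 0 < x + c) :
    HasDerivAt (fun y => (y + c) ^ p) (p * (x + c) ^ (p - 1)) x := by
  simpa using ((hasDerivAt_id x).add_const c).rpow_const (p := p) (Or.inl hx.ne')

lemma hasDerivAt_rpow_sub_const (p c : ℝ) {x : ℝ} (hx : 0 < x - c) :
    HasDerivAt (fun y => (y - c) ^ p) (p * (x - c) ^ (p - 1)) x := by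
  simpa using ((hasDerivAt_id x).sub_const c).rpow_const (p := p) (Or.inl hx.ne')

lemma convexOn_rpow_of_nonpos {p : ℝ} (hp : p ≤ 0) : ConvexOn ℝ (Ioi 0) fun x : ℝ => x ^ p := by
  refine convexOn_of_hasDerivWithinAt2_nonneg (convex_Ioi 0)
    (fun x hx => (continuousAt_rpow_const x p (Or.inl (ne_of_gt hx))).continuousWithinAt)
    (f' := fun x => p * x ^ (p - 1)) (f'' := fun x => p * ((p - 1) * x ^ (p - 1 - 1)))
    (fun x hx => ?_) (fun x hx => ?_) (fun x hx => ?_) <;> rw [interior_Ioi] at hx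
  · exact (hasDerivAt_rpow_const (Or.inl (ne_of_gt hx))).hasDerivWithinAt
  · exact ((hasDerivAt_rpow_const (Or.inl (ne_of_gt hx))).const_mul p).hasDerivWithinAt
  · have := rpow_pos_of_pos (mem_Ioi.mp hx) (p - 1 - 1)
    have : 0 ≤ p * (p - 1) := mul_nonneg_of_nonpos_of_nonpos hp (by linarith)
    nlinarith

lemma convexOn_Ici_one_of_hasDerivAt_eq_mul {F : ℝ → ℝ → ℝ} {s : ℝ} (hs : 1 ≤ s)
    (hcont : ContinuousOn (F s) (Ici 1))
    (hderiv : ∀ q x, 1 < x → HasDerivAt (F q) (q * F (q - 1) x) x)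
    (hnonneg : ∀ x, 1 < x → 0 ≤ F (s - 2) x) : ConvexOn ℝ (Ici 1) (F s) := by
  refine convexOn_of_hasDerivWithinAt2_nonneg (convex_Ici 1) hcont
    (f' := fun x => s * F (s - 1) x) (f'' := fun x => s * ((s - 1) * F (s - 1 - 1) x))
    (fun x hx => ?_) (fun x hx => ?_) (fun x hx => ?_) <;> rw [interior_Ici] at hx
  · exact (hderiv s x hx).hasDerivWithinAt
  · exact ((hderiv (s - 1) x hx).const_mul s).hasDerivWithinAt
  · rw [show s - 1 - 1 = s - 2 by ring]
    exact mul_nonneg (by linarith) (mul_nonneg (by linarith) (hnonneg x hx))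

noncomputable def powSecondDiff (s x : ℝ) : ℝ := (x + 1) ^ s - 2 * x ^ s + (x - 1) ^ s

noncomputable def powTangentGap (s x : ℝ) : ℝ := (x - 1) ^ s - x ^ s + s * x ^ (s - 1)

lemma hasDerivAt_powSecondDiff (s : ℝ) {x : ℝ} (hx : 1 < x) :
    HasDerivAt (powSecondDiff s) (s * powSecondDiff (s - 1) x) x := by
  have h := (((hasDerivAt_rpow_add_const s 1 (by linarith)).sub
    ((hasDerivAt_rpow_const (p := s) (Or.inl (by positivity : x ≠ 0))).const_mul 2)).add
    (hasDerivAt_rpow_sub_const s 1 (by linarith)))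
  exact h.congr_deriv (by unfold powSecondDiff; ring)

lemma hasDerivAt_powTangentGap (s : ℝ) {x : ℝ} (hx : 1 < x) :
    HasDerivAt (powTangentGap s) (s * powTangentGap (s - 1) x) x := by
  have h := (((hasDerivAt_rpow_sub_const s 1 (by linarith)).sub
    (hasDerivAt_rpow_const (p := s) (Or.inl (by positivity : x ≠ 0)))).add
    ((hasDerivAt_rpow_const (p := s - 1) (Or.inl (by positivity : x ≠ 0))).const_mul s))
  exact h.congr_deriv (by unfold powTangentGap; ring)

lemma continuousOn_powSecondDiff {s : ℝ} (hs : 0 ≤ s) : ContinuousOn (powSecondDiff s) (Ici 1) :=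
  (by unfold powSecondDiff; fun_prop : Continuous (powSecondDiff s)).continuousOn

lemma continuousOn_powTangentGap {s : ℝ} (hs : 1 ≤ s) :
    ContinuousOn (powTangentGap s) (Ici 1) := by
  have : 0 ≤ s := by linarith
  have : 0 ≤ s - 1 := by linarith
  exact (by unfold powTangentGap; fun_prop : Continuous (powTangentGap s)).continuousOn

lemma powSecondDiff_nonneg {p x : ℝ} (hp : p ≤ 0) (hx : 1 < x) : 0 ≤ powSecondDiff p x := by
  have := (convexOn_rpow_of_nonpos hp).secondDiff_nonneg (x := x)
    (mem_Ioi.mpr (by linarith)) (mem_Ioi.mpr (by linarith))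
  unfold powSecondDiff; linarith

lemma powSecondDiff_nonpos {p x : ℝ} (hp0 : 0 ≤ p) (hp1 : p ≤ 1) (hx : 1 ≤ x) :
    powSecondDiff p x ≤ 0 := by
  have := (concaveOn_rpow hp0 hp1).neg.secondDiff_nonneg (x := x)
    (mem_Ici.mpr (by linarith)) (mem_Ici.mpr (by linarith))
  simp only [Pi.neg_apply] at this
  unfold powSecondDiff; linarith

lemma powTangentGap_nonneg {p x : ℝ} (hp : p ≤ 0) (hx : 1 < x) : 0 ≤ powTangentGap p x := by
  have h := (convexOn_rpow_of_nonpos hp).slope_le_of_hasDerivAt (x := x - 1) (y := x)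
    (mem_Ioi.mpr (by linarith)) (mem_Ioi.mpr (by linarith)) (by linarith)
    (hasDerivAt_rpow_const (Or.inl (by positivity)))
  rw [slope_def_field, show x - (x - 1) = 1 by ring, div_one] at h
  unfold powTangentGap; linarith

lemma convexOn_powSecondDiff {s : ℝ} (hs1 : 1 ≤ s) (hs2 : s ≤ 2) :
    ConvexOn ℝ (Ici 1) (powSecondDiff s) :=
  convexOn_Ici_one_of_hasDerivAt_eq_mul hs1 (continuousOn_powSecondDiff (by linarith))
    (fun q _ hx => hasDerivAt_powSecondDiff q hx)
    (fun _ hx => powSecondDiff_nonneg (by linarith) hx)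

lemma convexOn_powTangentGap {s : ℝ} (hs1 : 1 ≤ s) (hs2 : s ≤ 2) :
    ConvexOn ℝ (Ici 1) (powTangentGap s) :=
  convexOn_Ici_one_of_hasDerivAt_eq_mul hs1 (continuousOn_powTangentGap hs1)
    (fun q _ hx => hasDerivAt_powTangentGap q hx)
    (fun _ hx => powTangentGap_nonneg (by linarith) hx)

lemma antitoneOn_powSecondDiff {s : ℝ} (hs1 : 1 ≤ s) (hs2 : s ≤ 2) :
    AntitoneOn (powSecondDiff s) (Ici 1) := by
  refine antitoneOn_of_hasDerivWithinAt_nonpos (convex_Ici 1)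
    (continuousOn_powSecondDiff (by linarith)) (f' := fun x => s * powSecondDiff (s - 1) x)
    (fun x hx => ?_) (fun x hx => ?_) <;> rw [interior_Ici] at hx
  · exact (hasDerivAt_powSecondDiff s hx).hasDerivWithinAt
  · exact mul_nonpos_of_nonneg_of_nonpos (by linarith)
      (powSecondDiff_nonpos (by linarith) (by linarith) (le_of_lt hx))

lemma rpow_le_four {s : ℝ} (hs : s ≤ 2) : (2 : ℝ) ^ s ≤ 4 := by
  calc (2 : ℝ) ^ s ≤ 2 ^ (2 : ℝ) := rpow_le_rpow_of_exponent_le (by norm_num) hs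
    _ = 4 := by norm_num

lemma three_rpow_sub_four_mul_two_rpow_add_seven_nonneg {s : ℝ} (hs1 : 1 ≤ s) (hs2 : s ≤ 2) :
    0 ≤ (3 : ℝ) ^ s - 4 * 2 ^ s + 7 := by
  have hderiv (t : ℝ) : HasDerivAt (fun t : ℝ => (3 : ℝ) ^ t - 4 * 2 ^ t + 7)
      (3 ^ t * log 3 - 4 * (2 ^ t * log 2)) t :=
    (((hasStrictDerivAt_const_rpow (by norm_num) t).hasDerivAt.sub
      ((hasStrictDerivAt_const_rpow (by norm_num) t).hasDerivAt.const_mul 4)).add_const 7)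
  have hanti : AntitoneOn (fun t : ℝ => (3 : ℝ) ^ t - 4 * 2 ^ t + 7) (Icc 1 2) := by
    refine antitoneOn_of_hasDerivWithinAt_nonpos (convex_Icc 1 2)
      (fun t _ => (hderiv t).continuousAt.continuousWithinAt)
      (fun t _ => (hderiv t).hasDerivWithinAt) (fun t ht => ?_)
    rw [interior_Icc] at ht
    -- `3^t ≤ (9/4) 2^t` and `9 log 3 ≤ 16 log 2`, i.e. `3^9 ≤ 2^16`
    have h32 : (3 : ℝ) ^ t ≤ 9 / 4 * 2 ^ t := by
      have : ((3 : ℝ) / 2) ^ t ≤ (3 / 2) ^ (2 : ℝ) :=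
        rpow_le_rpow_of_exponent_le (by norm_num) ht.2.le
      rw [div_rpow (by norm_num) (by norm_num), div_le_iff₀ (by positivity)] at this
      norm_num at this; linarith
    have hlog := log_le_log (by norm_num) (show (3 : ℝ) ^ 9 ≤ 2 ^ 16 by norm_num)
    rw [log_pow, log_pow] at hlog
    push_cast at hlog
    have := log_pos (by norm_num : (1 : ℝ) < 3)
    nlinarith [rpow_pos_of_pos (by norm_num : (0 : ℝ) < 2) t]
  have := hanti ⟨hs1, hs2⟩ ⟨by norm_num, le_rfl⟩ hs2
  norm_num at this ⊢; linarith

lemma powSecondDiff_one {s : ℝ} (hs : s ≠ 0) : powSecondDiff s 1 = 2 ^ s - 2 := by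
  norm_num [powSecondDiff, zero_rpow hs]

lemma powSecondDiff_two (s : ℝ) : powSecondDiff s 2 = 3 ^ s - 2 * 2 ^ s + 1 := by
  norm_num [powSecondDiff]

lemma powTangentGap_one {s : ℝ} (hs : s ≠ 0) : powTangentGap s 1 = s - 1 := by
  norm_num [powTangentGap, zero_rpow hs]
  ring

lemma powTangentGap_two (s : ℝ) : powTangentGap s 2 = 1 - 2 * 2 ^ (s - 1) + s * 2 ^ (s - 1) := by
  rw [powTangentGap, rpow_sub_one (by norm_num)]
  norm_num
  ring

/-! ### The L1 weights -/

section lCoef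

variable {γ : ℝ}

lemma lCoef_zero (hγ1 : γ < 1) : lCoef γ 0 = 1 := by
  simp [lCoef, zero_rpow (by linarith : 1 - γ ≠ 0)]

lemma one_sub_lCoef_one : 1 - lCoef γ 1 = 2 * (1 - (2 : ℝ) ^ (-γ)) := by
  rw [lCoef, show (1 - γ) = -γ + 1 by ring]
  norm_num [rpow_add_one]
  ring

lemma exists_lCoef_eq_mul_rpow (hγ1 : γ < 1) (n : ℕ) :
    ∃ c ∈ Ioo (n : ℝ) (n + 1), lCoef γ n = (1 - γ) * c ^ (-γ) := by
  obtain ⟨c, hc, h⟩ := exists_hasDerivAt_eq_slope (fun x : ℝ => x ^ (1 - γ))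
    (fun x => (1 - γ) * x ^ (-γ)) (by linarith : (n : ℝ) < n + 1)
    (continuousOn_id.rpow_const fun _ _ => Or.inr (by linarith))
    (fun x hx => by
      simpa [show 1 - γ - 1 = -γ by ring] using
        hasDerivAt_rpow_const (p := 1 - γ) (Or.inl (by linarith [hx.1, n.cast_nonneg' (α := ℝ)])))
  exact ⟨c, hc, by rw [lCoef, h]; ring⟩

lemma lCoef_pos (hγ1 : γ < 1) (n : ℕ) : 0 < lCoef γ n := by
  obtain ⟨c, hc, h⟩ := exists_lCoef_eq_mul_rpow hγ1 n
  rw [h]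
  exact mul_pos (by linarith) (rpow_pos_of_pos (by linarith [hc.1, n.cast_nonneg' (α := ℝ)]) _)

lemma lCoef_antitone (hγ0 : 0 < γ) (hγ1 : γ < 1) : Antitone (lCoef γ) := by
  refine antitone_nat_of_succ_le fun n => ?_
  obtain ⟨c, hc, hn⟩ := exists_lCoef_eq_mul_rpow hγ1 n
  obtain ⟨d, hd, hn1⟩ := exists_lCoef_eq_mul_rpow hγ1 (n + 1)
  push_cast at hd
  rw [hn, hn1]
  exact mul_le_mul_of_nonneg_left (rpow_le_rpow_of_nonpos
    (by linarith [hc.1, n.cast_nonneg' (α := ℝ)]) (by linarith [hc.2, hd.1]) (by linarith))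
    (by linarith)

lemma div_lCoef_pred_le (hγ0 : 0 < γ) (hγ1 : γ < 1) {r : ℝ} (hr : 0 ≤ r) {k : ℕ} (hk : 1 ≤ k) :
    r / lCoef γ (k - 1) ≤ (k : ℝ) ^ γ / (1 - γ) * r := by
  obtain ⟨c, hc, h⟩ := exists_lCoef_eq_mul_rpow hγ1 (k - 1)
  rw [Nat.cast_sub hk, Nat.cast_one, sub_add_cancel] at hc
  have hc0 : 0 < c := by linarith [hc.1, (show (1 : ℝ) ≤ k by exact_mod_cast hk)]
  have hck : (k : ℝ) ^ (-γ) ≤ c ^ (-γ) := rpow_le_rpow_of_nonpos hc0 hc.2.le (by linarith)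
  rw [rpow_neg (by positivity)] at hck
  rw [h, div_le_iff₀ (by rw [← h]; exact lCoef_pos hγ1 _)]
  have hkγ : 0 < (k : ℝ) ^ γ := rpow_pos_of_pos (by exact_mod_cast hk) γ
  calc r = (k : ℝ) ^ γ / (1 - γ) * r * ((1 - γ) * ((k : ℝ) ^ γ)⁻¹) := by
        field_simp [(by linarith : (1 - γ) ≠ 0)]
    _ ≤ _ := by gcongr

end lCoef

/-! ### The Riesz weights -/

lemma sum_Icc_one_succ {M : Type*} [AddCommMonoid M] (f : ℕ → M) (n : ℕ) :
    ∑ m ∈ Finset.Icc 1 (n + 1), f m = f 1 + ∑ m ∈ Finset.Icc 1 n, f (m + 1) := by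
  induction n with
  | zero => simp
  | succ n ih =>
    rw [Finset.sum_Icc_succ_top (by omega), ih, Finset.sum_Icc_succ_top (by omega), add_assoc]

section RieszWeights

variable {ν : ℝ}

@[simp] lemma aCoef_self (ν : ℝ) (j : ℕ) : aCoef ν j j = 1 := by simp [aCoef]

@[simp] lemma bCoef_self (ν : ℝ) (N j : ℕ) : bCoef ν N j j = 1 := by simp [bCoef]

lemma aCoef_zero_eq (ν : ℝ) {j : ℕ} (hj : 1 ≤ j) : aCoef ν j 0 = powTangentGap (3 - ν) j := by
  have hj0 : (0 : ℝ) < j := by exact_mod_cast hj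
  rw [aCoef, if_neg (by omega), if_pos rfl, powTangentGap, show (3 - ν) - 1 = 2 - ν by ring,
    show (3 : ℝ) - ν = (2 - ν) + 1 by ring, rpow_add_one hj0.ne']
  ring

lemma aCoef_of_lt (ν : ℝ) {j m : ℕ} (hm : 1 ≤ m) (hmj : m < j) :
    aCoef ν j m = powSecondDiff (3 - ν) ((j : ℝ) - m) := by
  rw [aCoef, if_neg (by omega), if_neg (by omega), powSecondDiff]

lemma aCoef_succ_succ (ν : ℝ) {j m : ℕ} (hm : 1 ≤ m) : aCoef ν (j + 1) (m + 1) = aCoef ν j m := by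
  simp only [aCoef, add_left_inj, add_eq_zero, one_ne_zero, and_false, if_false,
    if_neg (by omega : m ≠ 0)]
  push_cast
  ring_nf

lemma bCoef_eq_aCoef (ν : ℝ) {N j m : ℕ} (hjm : j ≤ m) (hm : m ≤ N) :
    bCoef ν N j m = aCoef ν (N - j) (N - m) := by
  unfold bCoef aCoef
  split_ifs <;> first | rfl | omega | skip
  all_goals push_cast [Nat.cast_sub (hjm.trans hm), Nat.cast_sub hm]
  all_goals ring_nf

lemma pCoef_of_lt (ν : ℝ) {i m : ℕ} (h : i < m) : pCoef ν i m = if m = i + 1 then 1 else 0 := by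
  rw [pCoef, if_neg (by omega), if_neg (by omega)]
  split_ifs <;> simp_all

lemma pCoef_self (hν : ν ∈ Ioc 1 2) {i : ℕ} (hi : 1 ≤ i) : pCoef ν i i = 2 ^ (3 - ν) - 4 := by
  rw [pCoef, if_neg (lt_irrefl i), if_pos rfl, aCoef_self, aCoef_of_lt ν hi (by omega),
    show ((i + 1 : ℕ) : ℝ) - i = 1 by push_cast; ring, powSecondDiff_one (by linarith [hν.2])]
  ring

lemma qCoef_eq_pCoef (ν : ℝ) {N i m : ℕ} (hi1 : 1 ≤ i) (hiN : i ≤ N) (hm : m ≤ N) :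
    qCoef ν N i m = pCoef ν (N - i) (N - m) := by
  unfold qCoef pCoef
  split_ifs <;> first | omega | skip
  · rfl
  · simp
  · rw [bCoef_eq_aCoef ν (by omega : i - 1 ≤ i) hiN, show N - (i - 1) = N - i + 1 by omega]
    simp
  · rw [bCoef_eq_aCoef ν (by omega : i - 1 ≤ m) hm, bCoef_eq_aCoef ν (by omega : i ≤ m) hm,
      bCoef_eq_aCoef ν (by omega : i + 1 ≤ m) hm, show N - (i - 1) = N - i + 1 by omega,
      show N - (i + 1) = N - i - 1 by omega]
    ring

lemma pCoef_add_nonneg (hν : ν ∈ Ioc 1 2) {i m : ℕ} (hmi : m < i) :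
    0 ≤ pCoef ν i m + if m + 1 = i then 1 else 0 := by
  have hs1 : 1 ≤ 3 - ν := by linarith [hν.2]
  have hs2 : 3 - ν ≤ 2 := by linarith [hν.1]
  rw [pCoef, if_pos hmi]
  rcases Nat.lt_or_ge (m + 1) i with hlt | hge
  · rw [if_neg hlt.ne]
    rcases Nat.eq_zero_or_pos m with rfl | hm
    · have := (convexOn_powTangentGap hs1 hs2).secondDiff_nonneg (x := i)
        (by rw [mem_Ici, le_sub_iff_add_le]; norm_cast) (mem_Ici.mpr (by norm_cast; omega))
      rw [aCoef_zero_eq ν (by omega), aCoef_zero_eq ν (by omega), aCoef_zero_eq ν (by omega)]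
      push_cast [Nat.cast_sub (by omega : 1 ≤ i)]
      linarith
    · have := (convexOn_powSecondDiff hs1 hs2).secondDiff_nonneg (x := (i : ℝ) - m)
        (mem_Ici.mpr (by rw [le_sub_iff_add_le, le_sub_iff_add_le]; norm_cast; omega))
        (mem_Ici.mpr (by rw [le_add_iff_nonneg_left, sub_nonneg]; norm_cast; omega))
      rw [aCoef_of_lt ν hm (by omega), aCoef_of_lt ν hm (by omega), aCoef_of_lt ν hm (by omega)]
      push_cast [Nat.cast_sub (by omega : 1 ≤ i)]
      ring_nf at this ⊢
      linarith
  · obtain rfl : i = m + 1 := by omega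
    rw [if_pos rfl, Nat.add_sub_cancel, aCoef_self]
    rcases Nat.eq_zero_or_pos m with rfl | hm
    · rw [aCoef_zero_eq ν le_rfl, aCoef_zero_eq ν (by norm_num)]
      norm_num [powTangentGap_one (by linarith : 3 - ν ≠ 0), powTangentGap_two]
      have h1 : (1 : ℝ) ≤ 2 ^ (3 - ν - 1) := one_le_rpow (by norm_num) (by linarith)
      have h2 : (2 : ℝ) ^ (3 - ν - 1) ≤ 2 := by
        simpa using rpow_le_rpow_of_exponent_le (by norm_num : (1 : ℝ) ≤ 2)
          (by linarith : 3 - ν - 1 ≤ 1)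
      nlinarith
    · rw [aCoef_of_lt ν hm (by omega), aCoef_of_lt ν hm (by omega)]
      push_cast
      rw [show (m : ℝ) + 1 - m = 1 by ring, show (m : ℝ) + 1 + 1 - m = 2 by ring,
        powSecondDiff_one (by linarith), powSecondDiff_two]
      linarith [three_rpow_sub_four_mul_two_rpow_add_seven_nonneg hs1 hs2]

lemma gCoef_eq_pCoef_add (ν : ℝ) {N i m : ℕ} (hi1 : 1 ≤ i) (hiN : i ≤ N) (hm : m ≤ N) :
    gCoef ν N i m = pCoef ν i m + pCoef ν (N - i) (N - m) := by
  rw [gCoef, qCoef_eq_pCoef ν hi1 hiN hm]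

lemma gCoef_reflect (ν : ℝ) {N i m : ℕ} (hi1 : 1 ≤ i) (hiN : i ≤ N - 1) (hm : m ≤ N) :
    gCoef ν N (N - i) (N - m) = gCoef ν N i m := by
  rw [gCoef_eq_pCoef_add ν (by omega) (by omega) (by omega), gCoef_eq_pCoef_add ν hi1 (by omega) hm,
    Nat.sub_sub_self (by omega), Nat.sub_sub_self hm, add_comm]

lemma gCoef_self (hν : ν ∈ Ioc 1 2) {N i : ℕ} (hi1 : 1 ≤ i) (hiN : i ≤ N - 1) :
    gCoef ν N i i = 2 * 2 ^ (3 - ν) - 8 := by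
  rw [gCoef_eq_pCoef_add ν hi1 (by omega) (by omega), pCoef_self hν hi1, pCoef_self hν (by omega)]
  ring

lemma gCoef_nonneg (hν : ν ∈ Ioc 1 2) {N i m : ℕ} (hi1 : 1 ≤ i) (hiN : i ≤ N - 1)
    (hm : m ≤ N) (hmi : m ≠ i) : 0 ≤ gCoef ν N i m := by
  wlog hlt : m < i generalizing i m
  · rw [← gCoef_reflect ν hi1 hiN hm]
    exact this (by omega) (by omega) (by omega) (by omega) (by omega)
  rw [gCoef_eq_pCoef_add ν hi1 (by omega) hm, pCoef_of_lt ν (by omega : N - i < N - m)]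
  have hiff : N - m = N - i + 1 ↔ m + 1 = i := by omega
  simpa only [hiff] using pCoef_add_nonneg hν hlt

noncomputable def aRowSum (ν : ℝ) (j : ℕ) : ℝ := ∑ m ∈ Finset.Icc 1 j, aCoef ν j m

lemma aRowSum_succ (ν : ℝ) {j : ℕ} (hj : 1 ≤ j) :
    aRowSum ν (j + 1) = aRowSum ν j + powSecondDiff (3 - ν) j := by
  rw [aRowSum, sum_Icc_one_succ, aCoef_of_lt ν le_rfl (by omega), aRowSum,
    Finset.sum_congr rfl fun m hm => aCoef_succ_succ ν (Finset.mem_Icc.mp hm).1]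
  push_cast
  ring_nf

lemma aRowSum_secondDiff_le (hν : ν ∈ Ioc 1 2) {i : ℕ} (hi : 1 ≤ i) :
    aRowSum ν (i - 1) - 2 * aRowSum ν i + aRowSum ν (i + 1) ≤ if i = 1 then 1 else 0 := by
  have hs1 : 1 ≤ 3 - ν := by linarith [hν.2]
  have hs2 : 3 - ν ≤ 2 := by linarith [hν.1]
  rw [aRowSum_succ ν hi]
  obtain rfl | hi2 := eq_or_lt_of_le hi
  · have h₀ : aRowSum ν 0 = 0 := by simp [aRowSum]
    have h₁ : aRowSum ν 1 = 1 := by simp [aRowSum]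
    rw [Nat.sub_self, h₀, h₁, if_pos rfl, Nat.cast_one, powSecondDiff_one (by linarith)]
    linarith [rpow_le_four hs2]
  · obtain ⟨k, rfl⟩ : ∃ k, i = k + 1 := ⟨i - 1, by omega⟩
    rw [if_neg (by omega), Nat.add_sub_cancel, aRowSum_succ ν (by omega)]
    have := antitoneOn_powSecondDiff hs1 hs2 (a := k) (b := k + 1)
      (mem_Ici.mpr (by norm_cast; omega)) (mem_Ici.mpr (by norm_cast)) (by linarith)
    push_cast at this ⊢
    linarith

lemma sum_Icc_pCoef (ν : ℝ) {N i : ℕ} (hi : 1 ≤ i) (hiN : i + 1 ≤ N) :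
    ∑ m ∈ Finset.Icc 1 N, pCoef ν i m
      = aRowSum ν (i - 1) - 2 * aRowSum ν i + aRowSum ν (i + 1) := by
  -- `p_{i,m}` is the second difference in `j` of `a_{j,m}`, extended by zero above the diagonal
  let a' : ℕ → ℕ → ℝ := fun j m => if m ≤ j then aCoef ν j m else 0
  have hp (m : ℕ) : pCoef ν i m = a' (i - 1) m - 2 * a' i m + a' (i + 1) m := by
    simp only [pCoef, a']
    split_ifs <;> first | omega | simp_all
  have hrow {j : ℕ} (hj : j ≤ N) : ∑ m ∈ Finset.Icc 1 N, a' j m = aRowSum ν j := by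
    rw [← Finset.sum_filter, aRowSum]
    congr 1
    ext m
    simp only [Finset.mem_filter, Finset.mem_Icc]
    omega
  simp only [hp, Finset.sum_add_distrib, Finset.sum_sub_distrib, ← Finset.mul_sum,
    hrow (by omega : i - 1 ≤ N), hrow (by omega : i ≤ N), hrow hiN]

lemma sum_pCoef_interior_le (hν : ν ∈ Ioc 1 2) {N i : ℕ} (hi1 : 1 ≤ i) (hiN : i ≤ N - 1) :
    ∑ m ∈ Finset.Icc 1 (N - 1), pCoef ν i m
      ≤ (if i = 1 then 1 else 0) - if i = N - 1 then 1 else 0 := by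
  have hsplit := Finset.sum_Icc_succ_top (by omega : 1 ≤ N - 1 + 1) (pCoef ν i)
  rw [Nat.sub_add_cancel (by omega), sum_Icc_pCoef ν hi1 (by omega),
    pCoef_of_lt ν (by omega : i < N)] at hsplit
  have := aRowSum_secondDiff_le hν hi1
  have hiff : N = i + 1 ↔ i = N - 1 := by omega
  simp only [hiff] at hsplit
  linarith

lemma sum_gCoef_interior_nonpos (hν : ν ∈ Ioc 1 2) {N i : ℕ} (hi1 : 1 ≤ i)
    (hiN : i ≤ N - 1) : ∑ m ∈ Finset.Icc 1 (N - 1), gCoef ν N i m ≤ 0 := by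
  have hreflect : ∑ m ∈ Finset.Icc 1 (N - 1), pCoef ν (N - i) (N - m)
      = ∑ m ∈ Finset.Icc 1 (N - 1), pCoef ν (N - i) m :=
    Finset.sum_nbij' (N - ·) (N - ·) (by intro m; simp only [Finset.mem_Icc]; omega)
      (by intro m; simp only [Finset.mem_Icc]; omega)
      (by intro m hm; simp only [Finset.mem_Icc] at hm; omega)
      (by intro m hm; simp only [Finset.mem_Icc] at hm; omega) (fun _ _ => rfl)
  rw [Finset.sum_congr rfl fun m hm => gCoef_eq_pCoef_add ν hi1 (by omega)
    (by simp only [Finset.mem_Icc] at hm; omega), Finset.sum_add_distrib, hreflect]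
  have h1 := sum_pCoef_interior_le hν hi1 hiN
  have h2 := sum_pCoef_interior_le hν (N := N) (i := N - i) (by omega) (by omega)
  split_ifs at h1 h2 <;> first | omega | linarith

end RieszWeights

/-! ### Stability of the explicit scheme -/

lemma abs_sum_mul_le {ι : Type*} (s : Finset ι) {w x : ι → ℝ} {M : ℝ} (hw : ∀ i ∈ s, 0 ≤ w i)
    (hx : ∀ i ∈ s, |x i| ≤ M) : |∑ i ∈ s, w i * x i| ≤ (∑ i ∈ s, w i) * M := by
  rw [Finset.sum_mul]
  refine (Finset.abs_sum_le_sum_abs _ _).trans (Finset.sum_le_sum fun i hi => ?_)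
  rw [abs_mul, abs_of_nonneg (hw i hi)]
  exact mul_le_mul_of_nonneg_left (hx i hi) (hw i hi)

lemma sum_Icc_sub_succ {G : Type*} [AddCommGroup G] (f : ℕ → G) (n : ℕ) :
    ∑ s ∈ Finset.Icc 1 n, (f s - f (s + 1)) = f 1 - f (n + 1) := by
  induction n with
  | zero => simp
  | succ n ih => rw [Finset.sum_Icc_succ_top (by omega), ih]; abel

lemma le_div_of_step_le_one_sub_mul_add {l e : ℕ → ℝ} {r : ℝ} {n : ℕ} (hl : ∀ k, 0 < l k)
    (hanti : Antitone l) (hl₀ : l 0 = 1) (hr : 0 ≤ r) (h₁ : 1 ≤ n → e 1 ≤ r)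
    (hstep : ∀ k, 1 ≤ k → k + 1 ≤ n → ∀ M, (∀ j, 1 ≤ j → j ≤ k → e j ≤ M) →
      e (k + 1) ≤ (1 - l k) * M + r) :
    ∀ k, 1 ≤ k → k ≤ n → e k ≤ r / l (k - 1) := by
  intro k
  induction k using Nat.strong_induction_on with
  | _ k ih =>
    intro hk hkn
    obtain rfl | hk1 := eq_or_lt_of_le hk
    · simpa [hl₀] using h₁ hkn
    obtain ⟨k, rfl⟩ : ∃ k', k = k' + 1 := ⟨k - 1, by omega⟩
    -- `r / l k` is the fixed point of `M ↦ (1 - l k) M + r`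
    calc e (k + 1) ≤ (1 - l k) * (r / l k) + r :=
          hstep k (by omega) hkn _ fun j hj hjk => (ih j (by omega) hj (by omega)).trans
            (div_le_div_of_nonneg_left hr (hl _) (hanti (by omega)))
      _ = r / l (k + 1 - 1) := by
          rw [Nat.add_sub_cancel]; field_simp [(hl k).ne']; ring

lemma abs_sum_lCoef_sub_mul_le {γ : ℝ} (hγ0 : 0 < γ) (hγ1 : γ < 1) {k : ℕ} (hk : 1 ≤ k)
    {u : ℕ → ℝ} {M : ℝ} (hu : ∀ n, 1 ≤ n → n < k → |u n| ≤ M) :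
    |∑ s ∈ Finset.Icc 1 (k - 1), (lCoef γ s - lCoef γ (s + 1)) * u (k - s)|
      ≤ (lCoef γ 1 - lCoef γ k) * M := by
  have h := abs_sum_mul_le (Finset.Icc 1 (k - 1))
    (fun s _ => sub_nonneg.mpr (lCoef_antitone hγ0 hγ1 (Nat.le_succ s)))
    (fun s hs => hu (k - s) (by simp only [Finset.mem_Icc] at hs; omega)
      (by simp only [Finset.mem_Icc] at hs; omega))
  rwa [sum_Icc_sub_succ, Nat.sub_add_cancel hk] at h

lemma abs_sum_gCoef_offDiag_le {ν : ℝ} (hν : ν ∈ Ioc 1 2) {N i : ℕ} (hi1 : 1 ≤ i)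
    (hiN : i ≤ N - 1) {v : ℕ → ℝ} {M : ℝ} (hv0 : v 0 = 0) (hvN : v N = 0)
    (hv : ∀ m ≤ N, |v m| ≤ M) :
    |∑ m ∈ (Finset.range (N + 1)).erase i, gCoef ν N i m * v m| ≤ -gCoef ν N i i * M := by
  have hM : 0 ≤ M := (abs_nonneg _).trans (hv 0 (Nat.zero_le N))
  have hinterior : ∑ m ∈ (Finset.range (N + 1)).erase i, gCoef ν N i m * v m
      = ∑ m ∈ (Finset.Icc 1 (N - 1)).erase i, gCoef ν N i m * v m := by
    refine (Finset.sum_subset (fun m => ?_) fun m hm hm' => ?_).symm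
    · simp only [Finset.mem_erase, Finset.mem_Icc, Finset.mem_range]; omega
    · simp only [Finset.mem_erase, Finset.mem_Icc, Finset.mem_range] at hm hm'
      obtain rfl | rfl : m = 0 ∨ m = N := by omega
      · rw [hv0, mul_zero]
      · rw [hvN, mul_zero]
  have h := abs_sum_mul_le ((Finset.Icc 1 (N - 1)).erase i)
    (fun m hm => gCoef_nonneg hν hi1 hiN
      (by simp only [Finset.mem_erase, Finset.mem_Icc] at hm; omega) (Finset.ne_of_mem_erase hm))
    (fun m hm => hv m (by simp only [Finset.mem_erase, Finset.mem_Icc] at hm; omega))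
  rw [Finset.sum_erase_eq_sub (f := gCoef ν N i) (by simp only [Finset.mem_Icc]; omega)] at h
  rw [hinterior]
  nlinarith [sum_gCoef_interior_nonpos hν hi1 hiN]

lemma abs_le_maxAbs2 {Nx Ny i j : ℕ} (v : ℕ → ℕ → ℝ) (hi : i ≤ Nx) (hj : j ≤ Ny) :
    |v i j| ≤ maxAbs2 Nx Ny v :=
  Finset.le_sup' (fun p : ℕ × ℕ => |v p.1 p.2|) (b := (i, j))
    (Finset.mem_product.mpr ⟨Finset.mem_range.mpr (by omega), Finset.mem_range.mpr (by omega)⟩)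

lemma maxAbs2_le {Nx Ny : ℕ} {v : ℕ → ℕ → ℝ} {B : ℝ}
    (h : ∀ i j, i ≤ Nx → j ≤ Ny → |v i j| ≤ B) : maxAbs2 Nx Ny v ≤ B :=
  Finset.sup'_le _ _ fun p hp => by
    simp only [Finset.mem_product, Finset.mem_range] at hp
    exact h p.1 p.2 (by omega) (by omega)

lemma maxAbs2_le_of_interior {Nx Ny : ℕ} {v : ℕ → ℕ → ℝ} {B : ℝ} (hB : 0 ≤ B)
    (hbd : ∀ i j, i ≤ Nx → j ≤ Ny → (i = 0 ∨ i = Nx ∨ j = 0 ∨ j = Ny) → v i j = 0)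
    (hint : ∀ i j, 1 ≤ i → i ≤ Nx - 1 → 1 ≤ j → j ≤ Ny - 1 → |v i j| ≤ B) :
    maxAbs2 Nx Ny v ≤ B :=
  maxAbs2_le fun i j hi hj => by
    by_cases h : 1 ≤ i ∧ i ≤ Nx - 1 ∧ 1 ≤ j ∧ j ≤ Ny - 1
    · exact hint i j h.1 h.2.1 h.2.2.1 h.2.2.2
    · rw [hbd i j hi hj (by omega), abs_zero]
      exact hB

lemma kappa_nonpos {ν : ℝ} (hν : ν ∈ Ioc 1 2) : kappa ν ≤ 0 := by
  have hcos : cos (ν * π / 2) ≤ 0 :=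
    cos_nonpos_of_pi_div_two_le_of_le (by nlinarith [hν.1, pi_pos]) (by nlinarith [hν.2, pi_pos])
  rw [kappa]
  exact div_nonpos_of_nonneg_of_nonpos zero_le_one (by linarith)

lemma sigma_nonneg_and_mul_le {G t h κ c Γν q C σ : ℝ} (hG : 0 < G) (ht : 0 < t) (hh : 0 < h)
    (hΓ : 0 < Γν) (hκ : κ ≤ 0) (hc : 0 ≤ c) (hC : (-κ) * q * c / Γν ≤ C)
    (hσ : σ = -(G * t * κ * c) / (Γν * h)) : 0 ≤ σ ∧ σ * q ≤ G * C * (t / h) := by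
  have hσ' : σ = G * (t / h) * ((-κ) * c / Γν) := by rw [hσ]; field_simp
  constructor
  · rw [hσ']; exact mul_nonneg (by positivity) (div_nonneg (by nlinarith) hΓ.le)
  · calc σ * q = G * (t / h) * ((-κ) * q * c / Γν) := by rw [hσ']; ring
      _ ≤ G * (t / h) * C := mul_le_mul_of_nonneg_left hC (by positivity)
      _ = G * C * (t / h) := by ring

lemma explicit_coeffs_nonneg {γ α β τ Δx Δy c d Cmax σx σy : ℝ} (hγ1 : γ < 1)
    (hα : α ∈ Ioc 1 2) (hβ : β ∈ Ioc 1 2) {Nx Ny i j : ℕ} (hi1 : 1 ≤ i)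
    (hi2 : i ≤ Nx - 1) (hj1 : 1 ≤ j) (hj2 : j ≤ Ny - 1) (hτ : 0 < τ) (hΔx : 0 < Δx)
    (hΔy : 0 < Δy) (hc : 0 ≤ c) (hd : 0 ≤ d)
    (hcC : (-kappa α) * (4 - (2 : ℝ) ^ (3 - α)) * c / Gamma (4 - α) ≤ Cmax)
    (hdC : (-kappa β) * (4 - (2 : ℝ) ^ (3 - β)) * d / Gamma (4 - β) ≤ Cmax)
    (hstab : Gamma (2 - γ) * Cmax * (τ ^ γ / Δx ^ α + τ ^ γ / Δy ^ β) ≤ 1 - (2 : ℝ) ^ (-γ))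
    (hσx : σx = -(Gamma (2 - γ) * τ ^ γ * kappa α * c) / (Gamma (4 - α) * Δx ^ α))
    (hσy : σy = -(Gamma (2 - γ) * τ ^ γ * kappa β * d) / (Gamma (4 - β) * Δy ^ β)) :
    0 ≤ σx ∧ 0 ≤ σy ∧ 0 ≤ 1 - lCoef γ 1 + σx * gCoef α Nx i i + σy * gCoef β Ny j j := by
  have hG : 0 < Gamma (2 - γ) := Gamma_pos_of_pos (by linarith)
  obtain ⟨hσx0, hσxC⟩ := sigma_nonneg_and_mul_le hG (rpow_pos_of_pos hτ γ)
    (rpow_pos_of_pos hΔx α) (Gamma_pos_of_pos (by linarith [hα.2])) (kappa_nonpos hα) hc hcC hσx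
  obtain ⟨hσy0, hσyC⟩ := sigma_nonneg_and_mul_le hG (rpow_pos_of_pos hτ γ)
    (rpow_pos_of_pos hΔy β) (Gamma_pos_of_pos (by linarith [hβ.2])) (kappa_nonpos hβ) hd hdC hσy
  refine ⟨hσx0, hσy0, ?_⟩
  rw [one_sub_lCoef_one, gCoef_self hα hi1 hi2, gCoef_self hβ hj1 hj2]
  linarith

noncomputable def explicitUpdate (γ α β : ℝ) (Nx Ny : ℕ) (σx σy : ℝ) (ε : ℕ → ℕ → ℕ → ℝ)
    (k i j : ℕ) : ℝ :=
  (1 - lCoef γ 1 + σx * gCoef α Nx i i + σy * gCoef β Ny j j) * ε k i j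
    + (∑ s ∈ Finset.Icc 1 (k - 1), (lCoef γ s - lCoef γ (s + 1)) * ε (k - s) i j)
    + σx * (∑ m ∈ (Finset.range (Nx + 1)).erase i, gCoef α Nx i m * ε k m j)
    + σy * (∑ m ∈ (Finset.range (Ny + 1)).erase j, gCoef β Ny j m * ε k i m)

section ExplicitScheme

variable {γ α β : ℝ} {Nx Ny k : ℕ} {ε : ℕ → ℕ → ℕ → ℝ} {M : ℝ}

lemma abs_explicitUpdate_le (hγ0 : 0 < γ) (hγ1 : γ < 1) (hα : α ∈ Ioc 1 2)
    (hβ : β ∈ Ioc 1 2) (hk : 1 ≤ k) {i j : ℕ} (hi1 : 1 ≤ i) (hi2 : i ≤ Nx - 1) (hj1 : 1 ≤ j)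
    (hj2 : j ≤ Ny - 1) {σx σy : ℝ} (hσx : 0 ≤ σx) (hσy : 0 ≤ σy)
    (hA : 0 ≤ 1 - lCoef γ 1 + σx * gCoef α Nx i i + σy * gCoef β Ny j j)
    (hbc : ∀ i j, i ≤ Nx → j ≤ Ny → (i = 0 ∨ i = Nx ∨ j = 0 ∨ j = Ny) → ε k i j = 0)
    (hM : ∀ n i j, 1 ≤ n → n ≤ k → i ≤ Nx → j ≤ Ny → |ε n i j| ≤ M) :
    |explicitUpdate γ α β Nx Ny σx σy ε k i j| ≤ (1 - lCoef γ k) * M := by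
  have he := hM k i j hk le_rfl (by omega) (by omega)
  have hH := abs_sum_lCoef_sub_mul_le hγ0 hγ1 hk (u := fun n => ε n i j)
    fun n hn₁ hn => hM n i j (by omega) (by omega) (by omega) (by omega)
  have hSx := abs_sum_gCoef_offDiag_le hα hi1 hi2 (hbc 0 j (by omega) (by omega) (by simp))
    (hbc Nx j le_rfl (by omega) (by simp)) fun m hm => hM k m j hk le_rfl hm (by omega)
  have hSy := abs_sum_gCoef_offDiag_le hβ hj1 hj2 (hbc i 0 (by omega) (by omega) (by simp))
    (hbc i Ny (by omega) le_rfl (by simp)) fun m hm => hM k i m hk le_rfl (by omega) hm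
  rw [explicitUpdate]
  set A := 1 - lCoef γ 1 + σx * gCoef α Nx i i + σy * gCoef β Ny j j
  set H := ∑ s ∈ Finset.Icc 1 (k - 1), (lCoef γ s - lCoef γ (s + 1)) * ε (k - s) i j
  set Sx := ∑ m ∈ (Finset.range (Nx + 1)).erase i, gCoef α Nx i m * ε k m j
  set Sy := ∑ m ∈ (Finset.range (Ny + 1)).erase j, gCoef β Ny j m * ε k i m
  have h₁ := abs_add_le (A * ε k i j + H + σx * Sx) (σy * Sy)
  have h₂ := abs_add_le (A * ε k i j + H) (σx * Sx)
  have h₃ := abs_add_le (A * ε k i j) H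
  rw [abs_mul, abs_of_nonneg hA] at h₃
  rw [abs_mul, abs_of_nonneg hσx] at h₂
  rw [abs_mul, abs_of_nonneg hσy] at h₁
  -- the weights `A`, `l₁ - lₖ`, `-σx gₓ`, `-σy g_y` add up to `1 - lₖ`
  nlinarith [mul_le_mul_of_nonneg_left he hA, mul_le_mul_of_nonneg_left hSx hσx,
    mul_le_mul_of_nonneg_left hSy hσy]

lemma maxAbs2_succ_le (hγ0 : 0 < γ) (hγ1 : γ < 1) (hα : α ∈ Ioc 1 2) (hβ : β ∈ Ioc 1 2)
    (hk : 1 ≤ k) {σx σy R : ℕ → ℕ → ℝ} {Rmax : ℝ} (hR₀ : 0 ≤ Rmax)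
    (hM : ∀ n, 1 ≤ n → n ≤ k → maxAbs2 Nx Ny (ε n) ≤ M)
    (hbc : ∀ n i j, k ≤ n → n ≤ k + 1 → i ≤ Nx → j ≤ Ny → (i = 0 ∨ i = Nx ∨ j = 0 ∨ j = Ny) →
      ε n i j = 0)
    (hcoef : ∀ i j, 1 ≤ i → i ≤ Nx - 1 → 1 ≤ j → j ≤ Ny - 1 → 0 ≤ σx i j ∧ 0 ≤ σy i j ∧
      0 ≤ 1 - lCoef γ 1 + σx i j * gCoef α Nx i i + σy i j * gCoef β Ny j j)
    (hR : ∀ i j, 1 ≤ i → i ≤ Nx - 1 → 1 ≤ j → j ≤ Ny - 1 → |R i j| ≤ Rmax)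
    (hscheme : ∀ i j, 1 ≤ i → i ≤ Nx - 1 → 1 ≤ j → j ≤ Ny - 1 →
      ε (k + 1) i j = explicitUpdate γ α β Nx Ny (σx i j) (σy i j) ε k i j + R i j) :
    maxAbs2 Nx Ny (ε (k + 1)) ≤ (1 - lCoef γ k) * M + Rmax := by
  have hεM (n i j : ℕ) (hn₁ : 1 ≤ n) (hn : n ≤ k) (hi : i ≤ Nx) (hj : j ≤ Ny) : |ε n i j| ≤ M :=
    (abs_le_maxAbs2 _ hi hj).trans (hM n hn₁ hn)
  have hM₀ : 0 ≤ M := (abs_nonneg _).trans (hεM 1 0 0 le_rfl hk (Nat.zero_le _) (Nat.zero_le _))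
  have hl : lCoef γ k ≤ 1 := (lCoef_antitone hγ0 hγ1 (Nat.zero_le k)).trans_eq (lCoef_zero hγ1)
  refine maxAbs2_le_of_interior (by nlinarith) (hbc (k + 1) · · (by omega) le_rfl)
    fun i j h₁ h₂ h₃ h₄ => ?_
  obtain ⟨hσx, hσy, hA⟩ := hcoef i j h₁ h₂ h₃ h₄
  rw [hscheme i j h₁ h₂ h₃ h₄]
  exact (abs_add_le _ _).trans (add_le_add (abs_explicitUpdate_le hγ0 hγ1 hα hβ hk h₁ h₂ h₃ h₄
    hσx hσy hA (hbc k · · le_rfl (by omega)) hεM) (hR i j h₁ h₂ h₃ h₄))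

end ExplicitScheme

lemma natCast_rpow_div_mul_le {γ τ T C X r : ℝ} {k N : ℕ} (hγ0 : 0 < γ) (hγ1 : γ < 1)
    (hτ : 0 < τ) (hC : 0 ≤ C) (hX : 0 ≤ X) (hkN : k ≤ N) (hNT : N * τ ≤ T)
    (hr : r ≤ C * τ ^ γ * X) : (k : ℝ) ^ γ / (1 - γ) * r ≤ C * T ^ γ / (1 - γ) * X := by
  have hkτ : ((k : ℝ) * τ) ^ γ ≤ T ^ γ := rpow_le_rpow (by positivity)
    ((mul_le_mul_of_nonneg_right (by exact_mod_cast hkN) hτ.le).trans hNT) hγ0.le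
  rw [mul_rpow (by positivity) hτ.le] at hkτ
  have h1γ : 0 < 1 - γ := by linarith
  calc (k : ℝ) ^ γ / (1 - γ) * r ≤ (k : ℝ) ^ γ / (1 - γ) * (C * τ ^ γ * X) := by gcongr
    _ = C * X / (1 - γ) * ((k : ℝ) ^ γ * τ ^ γ) := by ring
    _ ≤ C * X / (1 - γ) * T ^ γ := by gcongr
    _ = C * T ^ γ / (1 - γ) * X := by ring

theorem explicit_2d_convergence_general (γ α β : ℝ) (hγ : γ ∈ Set.Ioo (0:ℝ) 1)
    (hα : α ∈ Set.Ioc (1:ℝ) 2) (hβ : β ∈ Set.Ioc (1:ℝ) 2)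
    (Nx Ny Nt : ℕ)
    (τ Δx Δy : ℝ) (hτ : 0 < τ) (hΔx : 0 < Δx) (hΔy : 0 < Δy)
    (c d : ℕ → ℕ → ℕ → ℝ) (Cmax : ℝ)
    (hcd : ∀ i j k : ℕ, 1 ≤ i → i ≤ Nx - 1 → 1 ≤ j → j ≤ Ny - 1 → k ≤ Nt - 1 →
      0 ≤ c i j k ∧ 0 ≤ d i j k ∧
      (-kappa α) * (4 - (2:ℝ) ^ (3 - α)) * c i j k / Real.Gamma (4 - α) ≤ Cmax ∧
      (-kappa β) * (4 - (2:ℝ) ^ (3 - β)) * d i j k / Real.Gamma (4 - β) ≤ Cmax)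
    (hstab : Real.Gamma (2 - γ) * Cmax * (τ ^ γ / Δx ^ α + τ ^ γ / Δy ^ β)
      ≤ 1 - (2:ℝ) ^ (-γ))
    (σ' σ'' : ℕ → ℕ → ℕ → ℝ)
    (hσ : ∀ i j k : ℕ, 1 ≤ i → i ≤ Nx - 1 → 1 ≤ j → j ≤ Ny - 1 → k ≤ Nt - 1 →
      σ' i j k = -(Real.Gamma (2 - γ) * τ ^ γ * kappa α * c i j k)
          / (Real.Gamma (4 - α) * Δx ^ α) ∧
      σ'' i j k = -(Real.Gamma (2 - γ) * τ ^ γ * kappa β * d i j k)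
          / (Real.Gamma (4 - β) * Δy ^ β))
    (R : ℕ → ℕ → ℕ → ℝ) (Rmax : ℝ)
    (hRmax : IsGreatest
      {x : ℝ | ∃ i j k : ℕ, 1 ≤ i ∧ i ≤ Nx - 1 ∧ 1 ≤ j ∧ j ≤ Ny - 1 ∧ 1 ≤ k ∧ k ≤ Nt ∧
        x = |R k i j|} Rmax)
    (ε : ℕ → ℕ → ℕ → ℝ)
    (hinit : ∀ i j : ℕ, i ≤ Nx → j ≤ Ny → ε 0 i j = 0)
    (hbc : ∀ k i j : ℕ, 1 ≤ k → k ≤ Nt → i ≤ Nx → j ≤ Ny →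
      (i = 0 ∨ i = Nx ∨ j = 0 ∨ j = Ny) → ε k i j = 0)
    (hscheme0 : ∀ i j : ℕ, 1 ≤ i → i ≤ Nx - 1 → 1 ≤ j → j ≤ Ny - 1 → ε 1 i j = R 1 i j)
    (hscheme : ∀ i j k : ℕ, 1 ≤ i → i ≤ Nx - 1 → 1 ≤ j → j ≤ Ny - 1 → 1 ≤ k → k + 1 ≤ Nt →
      ε (k + 1) i j
      = (1 - lCoef γ 1 + σ' i j k * gCoef α Nx i i + σ'' i j k * gCoef β Ny j j) * ε k i j
        + (∑ s ∈ Finset.Icc 1 (k - 1), (lCoef γ s - lCoef γ (s + 1)) * ε (k - s) i j)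
        + σ' i j k * (∑ m ∈ (Finset.range (Nx + 1)).erase i, gCoef α Nx i m * ε k m j)
        + σ'' i j k * (∑ m ∈ (Finset.range (Ny + 1)).erase j, gCoef β Ny j m * ε k i m)
        + R (k + 1) i j) :
    (∀ k : ℕ, 1 ≤ k → k ≤ Nt →
      maxAbs2 Nx Ny (ε k) ≤ Rmax / lCoef γ (k - 1) ∧
      Rmax / lCoef γ (k - 1) ≤ (k : ℝ) ^ γ / (1 - γ) * Rmax) ∧
    (∀ T C : ℝ, 0 < T → (Nt : ℝ) * τ ≤ T → 0 < C →
      (∀ i j k : ℕ, 1 ≤ i → i ≤ Nx - 1 → 1 ≤ j → j ≤ Ny - 1 → 1 ≤ k → k ≤ Nt →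
        |R k i j| ≤ C * τ ^ γ * (τ ^ (2 - γ) + Δx ^ 2 + Δy ^ 2)) →
      ∀ k : ℕ, k ≤ Nt →
        maxAbs2 Nx Ny (ε k) ≤ C * T ^ γ / (1 - γ) * (τ ^ (2 - γ) + Δx ^ 2 + Δy ^ 2)) := by
  obtain ⟨hγ0, hγ1⟩ := hγ
  have hR (i j k : ℕ) (h₁ : 1 ≤ i) (h₂ : i ≤ Nx - 1) (h₃ : 1 ≤ j) (h₄ : j ≤ Ny - 1) (h₅ : 1 ≤ k)
      (h₆ : k ≤ Nt) : |R k i j| ≤ Rmax := hRmax.2 ⟨i, j, k, h₁, h₂, h₃, h₄, h₅, h₆, rfl⟩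
  obtain ⟨i₀, j₀, k₀, h₁, h₂, h₃, h₄, h₅, h₆, hRmax_eq⟩ := hRmax.1
  have hR₀ : 0 ≤ Rmax := hRmax_eq ▸ abs_nonneg _
  have hbound : ∀ k, 1 ≤ k → k ≤ Nt → maxAbs2 Nx Ny (ε k) ≤ Rmax / lCoef γ (k - 1) := by
    refine le_div_of_step_le_one_sub_mul_add (lCoef_pos hγ1) (lCoef_antitone hγ0 hγ1)
      (lCoef_zero hγ1) hR₀ (fun hN => maxAbs2_le_of_interior hR₀ (hbc 1 · · le_rfl hN)
        fun i j h₁ h₂ h₃ h₄ => hscheme0 i j h₁ h₂ h₃ h₄ ▸ hR i j 1 h₁ h₂ h₃ h₄ le_rfl hN)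
      fun k hk hkN M hM => maxAbs2_succ_le hγ0 hγ1 hα hβ hk hR₀ hM
        (fun n i j hn hn' => hbc n i j (by omega) (by omega))
        (fun i j h₁ h₂ h₃ h₄ => ?_)
        (fun i j h₁ h₂ h₃ h₄ => hR i j (k + 1) h₁ h₂ h₃ h₄ (by omega) hkN)
        (fun i j h₁ h₂ h₃ h₄ => hscheme i j k h₁ h₂ h₃ h₄ hk hkN)
    obtain ⟨hc, hd, hcC, hdC⟩ := hcd i j k h₁ h₂ h₃ h₄ (by omega)
    obtain ⟨hσx, hσy⟩ := hσ i j k h₁ h₂ h₃ h₄ (by omega)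
    exact explicit_coeffs_nonneg hγ1 hα hβ h₁ h₂ h₃ h₄ hτ hΔx hΔy hc hd hcC hdC hstab hσx hσy
  refine ⟨fun k hk hkN => ⟨hbound k hk hkN, div_lCoef_pred_le hγ0 hγ1 hR₀ hk⟩, ?_⟩
  intro T C hT hNtT hC hRC k hkN
  obtain rfl | hk := Nat.eq_zero_or_pos k
  · have h1γ : 0 < 1 - γ := by linarith
    exact (maxAbs2_le fun i j hi hj => by rw [hinit i j hi hj, abs_zero]).trans (by positivity)
  exact ((hbound k hk hkN).trans (div_lCoef_pred_le hγ0 hγ1 hR₀ hk)).trans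
    (natCast_rpow_div_mul_le hγ0 hγ1 hτ hC.le (by positivity) hkN hNtT
      (hRmax_eq ▸ hRC i₀ j₀ k₀ h₁ h₂ h₃ h₄ h₅ h₆))

/-- Theorem 4.4 (case `0 < γ < 1`): conditional convergence of the two-dimensional
explicit scheme under the stability condition
`Γ(2-γ) C_max (τ^γ/Δx^α + τ^γ/Δy^β) ≤ 1 - 2^(-γ)`. -/
theorem explicit_2d_convergence (γ α β : ℝ) (hγ : γ ∈ Set.Ioo (0:ℝ) 1)
    (hα : α ∈ Set.Ioc (1:ℝ) 2) (hβ : β ∈ Set.Ioc (1:ℝ) 2)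
    (Nx Ny Nt : ℕ) (hNx : 2 ≤ Nx) (hNy : 2 ≤ Ny) (hNt : 1 ≤ Nt)
    (τ Δx Δy : ℝ) (hτ : 0 < τ) (hΔx : 0 < Δx) (hΔy : 0 < Δy)
    (c d : ℕ → ℕ → ℕ → ℝ) (Cmax : ℝ)
    (hcd : ∀ i j k : ℕ, 1 ≤ i → i ≤ Nx - 1 → 1 ≤ j → j ≤ Ny - 1 → k ≤ Nt - 1 →
      0 ≤ c i j k ∧ 0 ≤ d i j k ∧
      (-kappa α) * (4 - (2:ℝ) ^ (3 - α)) * c i j k / Real.Gamma (4 - α) ≤ Cmax ∧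
      (-kappa β) * (4 - (2:ℝ) ^ (3 - β)) * d i j k / Real.Gamma (4 - β) ≤ Cmax)
    (hstab : Real.Gamma (2 - γ) * Cmax * (τ ^ γ / Δx ^ α + τ ^ γ / Δy ^ β)
      ≤ 1 - (2:ℝ) ^ (-γ))
    (σ' σ'' : ℕ → ℕ → ℕ → ℝ)
    (hσ : ∀ i j k : ℕ, 1 ≤ i → i ≤ Nx - 1 → 1 ≤ j → j ≤ Ny - 1 → k ≤ Nt - 1 →
      σ' i j k = -(Real.Gamma (2 - γ) * τ ^ γ * kappa α * c i j k)
          / (Real.Gamma (4 - α) * Δx ^ α) ∧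
      σ'' i j k = -(Real.Gamma (2 - γ) * τ ^ γ * kappa β * d i j k)
          / (Real.Gamma (4 - β) * Δy ^ β))
    (R : ℕ → ℕ → ℕ → ℝ) (Rmax : ℝ)
    (hRmax : IsGreatest
      {x : ℝ | ∃ i j k : ℕ, 1 ≤ i ∧ i ≤ Nx - 1 ∧ 1 ≤ j ∧ j ≤ Ny - 1 ∧ 1 ≤ k ∧ k ≤ Nt ∧
        x = |R k i j|} Rmax)
    (ε : ℕ → ℕ → ℕ → ℝ)
    (hinit : ∀ i j : ℕ, i ≤ Nx → j ≤ Ny → ε 0 i j = 0)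
    (hbc : ∀ k i j : ℕ, 1 ≤ k → k ≤ Nt → i ≤ Nx → j ≤ Ny →
      (i = 0 ∨ i = Nx ∨ j = 0 ∨ j = Ny) → ε k i j = 0)
    (hscheme0 : ∀ i j : ℕ, 1 ≤ i → i ≤ Nx - 1 → 1 ≤ j → j ≤ Ny - 1 → ε 1 i j = R 1 i j)
    (hscheme : ∀ i j k : ℕ, 1 ≤ i → i ≤ Nx - 1 → 1 ≤ j → j ≤ Ny - 1 → 1 ≤ k → k + 1 ≤ Nt →
      ε (k + 1) i j
      = (1 - lCoef γ 1 + σ' i j k * gCoef α Nx i i + σ'' i j k * gCoef β Ny j j) * ε k i j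
        + (∑ s ∈ Finset.Icc 1 (k - 1), (lCoef γ s - lCoef γ (s + 1)) * ε (k - s) i j)
        + σ' i j k * (∑ m ∈ (Finset.range (Nx + 1)).erase i, gCoef α Nx i m * ε k m j)
        + σ'' i j k * (∑ m ∈ (Finset.range (Ny + 1)).erase j, gCoef β Ny j m * ε k i m)
        + R (k + 1) i j) :
    (∀ k : ℕ, 1 ≤ k → k ≤ Nt →
      maxAbs2 Nx Ny (ε k) ≤ Rmax / lCoef γ (k - 1) ∧
      Rmax / lCoef γ (k - 1) ≤ (k : ℝ) ^ γ / (1 - γ) * Rmax) ∧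
    (∀ T C : ℝ, 0 < T → (Nt : ℝ) * τ ≤ T → 0 < C →
      (∀ i j k : ℕ, 1 ≤ i → i ≤ Nx - 1 → 1 ≤ j → j ≤ Ny - 1 → 1 ≤ k → k ≤ Nt →
        |R k i j| ≤ C * τ ^ γ * (τ ^ (2 - γ) + Δx ^ 2 + Δy ^ 2)) →
      ∀ k : ℕ, k ≤ Nt →
        maxAbs2 Nx Ny (ε k) ≤ C * T ^ γ / (1 - γ) * (τ ^ (2 - γ) + Δx ^ 2 + Δy ^ 2)) :=
  explicit_2d_convergence_general γ α β hγ hα hβ Nx Ny Nt τ Δx Δy hτ hΔx hΔy c d Cmax hcd hstab σ'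
    σ'' hσ R Rmax hRmax ε hinit hbc hscheme0 hscheme
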